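/- Let φ be a white-noise random dynamical system on a complete separable metric space (E,d) over an ergodic metric dynamical system. If weak synchronization holds for φ with synchronizing random point a : Ω → E, then the measure ρ := E[δ_{a(ω)}] is an invariant probability measure, φ is strongly mixing with respect to ρ, and for all x,y ∈ E the distance d(φ_t(·,x), φ_t(·,y)) converges to 0 in probability as t → ∞; in particular φ satisfies weak global pointwise stability. -/

import Mathlib

open MeasureTheory ProbabilityTheory Filter Topology
open scoped ENNReal

/-- A white-noise (filtered) random dynamical system on a metric space `E` over an ergodic
metric dynamical system `θ` on a probability space `(Ω, F, P)`. -/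
structure WhiteNoiseRDS (Ω E : Type) [MeasurableSpace Ω] [MetricSpace E]
    [MeasurableSpace E] [BorelSpace E] where
  /-- the underlying probability measure -/
  P : Measure Ω
  P_prob : IsProbabilityMeasure P
  /-- the metric dynamical system (group of shifts) -/
  θ : ℝ → Ω → Ω
  θ_meas : ∀ t, Measurable (θ t)
  θ_zero : ∀ ω, θ 0 ω = ω
  θ_add : ∀ s t : ℝ, ∀ ω, θ (s + t) ω = θ s (θ t ω)
  θ_preserves : ∀ t, MeasurePreserving (θ t) P P
  θ_ergodic : ∀ A : Set Ω, MeasurableSet A → (∀ t, θ t ⁻¹' A = A) → P A = 0 ∨ P A = 1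
  /-- the cocycle -/
  φ : ℝ → Ω → E → E
  φ_meas : Measurable fun p : ℝ × Ω × E => φ p.1 p.2.1 p.2.2
  φ_zero : ∀ ω x, φ 0 ω x = x
  φ_cocycle : ∀ s t : ℝ, 0 ≤ s → 0 ≤ t → ∀ ω x, φ (t + s) ω x = φ t (θ s ω) (φ s ω x)
  φ_cont : ∀ s : ℝ, 0 ≤ s → ∀ ω, Continuous fun x => φ s ω x
  /-- two-parameter filtration -/
  F : ℝ → ℝ → MeasurableSpace Ω
  F_le : ∀ s t : ℝ, F s t ≤ ‹MeasurableSpace Ω›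
  F_mono : ∀ s t u v : ℝ, s ≤ t → t ≤ u → u ≤ v → F t u ≤ F s v
  F_shift : ∀ r s t : ℝ, F (s + r) (t + r) = MeasurableSpace.comap (θ r) (F s t)
  F_indep : ∀ (n : ℕ) (ts : Fin (n + 1) → ℝ), Monotone ts →
    iIndep (fun i : Fin n => F (ts i.castSucc) (ts i.succ)) P
  φ_adapted : ∀ s : ℝ, 0 ≤ s → ∀ x : E, Measurable[F 0 s] fun ω => φ s ω x

namespace WhiteNoiseRDS

variable {Ω E : Type} [MeasurableSpace Ω] [MetricSpace E] [MeasurableSpace E] [BorelSpace E]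

/-- `F_0`: the smallest σ-algebra containing all `F s 0`, `s ≤ 0`. -/
def F0 (R : WhiteNoiseRDS Ω E) : MeasurableSpace Ω := ⨆ s ∈ Set.Iic (0 : ℝ), R.F s 0

/-- `ρ` is an invariant probability measure for the Markov semigroup associated to `φ`. -/
def Invariant (R : WhiteNoiseRDS Ω E) (ρ : Measure E) : Prop :=
  ∀ t : ℝ, 0 ≤ t → ∀ f : BoundedContinuousFunction E ℝ,
    ∫ x, (∫ ω, f (R.φ t ω x) ∂ R.P) ∂ρ = ∫ x, f x ∂ρ

/-- `φ` is strongly mixing w.r.t. `ρ`: the law of `φ_t(·,x)` converges weakly to `ρ`. -/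
def StronglyMixing (R : WhiteNoiseRDS Ω E) (ρ : Measure E) : Prop :=
  ∀ x : E, ∀ f : BoundedContinuousFunction E ℝ,
    Tendsto (fun t : ℝ => ∫ ω, f (R.φ t ω x) ∂ R.P) atTop (𝓝 (∫ y, f y ∂ρ))

/-- Weak global pointwise stability: there is a Borel set `U` of full `ρ`-measure and times
`t n ↑ ∞` such that any two points of `U` come `η`-close along `t n` with probability
bounded below by some `δ(x,y) > 0`. -/
def WeakGlobalPointwiseStability (R : WhiteNoiseRDS Ω E) (ρ : Measure E) : Prop :=
  ∃ U : Set E, MeasurableSet U ∧ ρ U = 1 ∧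
    ∃ t : ℕ → ℝ, StrictMono t ∧ Tendsto t atTop atTop ∧
      ∀ x ∈ U, ∀ y ∈ U, ∃ δ : ℝ≥0∞, 0 < δ ∧ ∀ η : ℝ, 0 < η →
        δ ≤ liminf (fun n => R.P {ω | dist (R.φ (t n) ω x) (R.φ (t n) ω y) ≤ η}) atTop

/-- Weak synchronization: there is an `F_0`-measurable random point `a` which is invariant
under the flow and attracts every deterministic point in probability (in the pullback sense). -/
def WeakSynchronization (R : WhiteNoiseRDS Ω E) : Prop :=
  ∃ a : Ω → E, Measurable[R.F0] a ∧
    (∀ t : ℝ, 0 ≤ t → ∀ᵐ ω ∂ R.P, R.φ t ω (a ω) = a (R.θ t ω)) ∧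
    ∀ x : E, ∀ ε : ℝ, 0 < ε →
      Tendsto (fun t : ℝ => R.P {ω | ε ≤ dist (R.φ t (R.θ (-t) ω) x) (a ω)}) atTop (𝓝 0)

end WhiteNoiseRDS

/-!
Pulling the attraction back along the measure-preserving shift `θ t` turns it into forward
attraction: `φ t · x` is close in probability to `a ∘ θ t`, and `a ∘ θ t` has law `ρ = P ∘ a⁻¹` for
every `t`. Hence the law of `φ t · x` converges weakly to `ρ`, and any two trajectories approach
each other through `a ∘ θ t`. For invariance, `a` is `F_0`-measurable, hence independent of
`F_{0,t}`, with respect to which `φ t` is measurable; freezing `a` gives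
`E f(φ t · (a ·)) = ∫ E f(φ t · x) dρ(x)`, while `φ t · (a ·) = a ∘ θ t` almost surely has law `ρ`.
-/

open Metric

theorem tendsto_measure_le_dist_triangle_right {Ω E ι : Type*} {mΩ : MeasurableSpace Ω}
    [PseudoMetricSpace E] {l : Filter ι} {μ : Measure Ω} {X Y Z : ι → Ω → E}
    (hXZ : ∀ ε > 0, Tendsto (fun i => μ {ω | ε ≤ dist (X i ω) (Z i ω)}) l (𝓝 0))
    (hYZ : ∀ ε > 0, Tendsto (fun i => μ {ω | ε ≤ dist (Y i ω) (Z i ω)}) l (𝓝 0))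
    {ε : ℝ} (hε : 0 < ε) :
    Tendsto (fun i => μ {ω | ε ≤ dist (X i ω) (Y i ω)}) l (𝓝 0) := by
  have hsplit : ∀ i, μ {ω | ε ≤ dist (X i ω) (Y i ω)} ≤
      μ {ω | ε / 2 ≤ dist (X i ω) (Z i ω)} + μ {ω | ε / 2 ≤ dist (Y i ω) (Z i ω)} := fun i => by
    refine (measure_mono fun ω hω => ?_).trans (measure_union_le _ _)
    by_contra h
    simp only [Set.mem_union, Set.mem_ofPred_eq, not_or, not_le] at h hω
    linarith [dist_triangle_right (X i ω) (Y i ω) (Z i ω)]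
  have hsum := (hXZ _ (half_pos hε)).add (hYZ _ (half_pos hε))
  rw [add_zero] at hsum
  exact tendsto_of_tendsto_of_tendsto_of_le_of_le tendsto_const_nhds hsum (fun _ => zero_le) hsplit

namespace MeasureTheory

variable {Ω Ω' E ι : Type*} {mΩ : MeasurableSpace Ω} {mΩ' : MeasurableSpace Ω'}
  [PseudoMetricSpace E] [MeasurableSpace E] [OpensMeasurableSpace E]
  {l : Filter ι} [l.IsCountablyGenerated] {μ : Measure Ω} [IsProbabilityMeasure μ]
  {μ' : Measure Ω'} [IsProbabilityMeasure μ']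

theorem TendstoInDistribution.of_tendsto_measure_le_dist {X Y : ι → Ω → E} {Z : Ω' → E}
    (hY : TendstoInDistribution Y l Z (fun _ => μ) μ') (hX : ∀ i, Measurable (X i))
    (hXY : ∀ ε > 0, Tendsto (fun i => μ {ω | ε ≤ dist (X i ω) (Y i ω)}) l (𝓝 0)) :
    TendstoInDistribution X l Z (fun _ => μ) μ' := by
  refine ⟨fun i => (hX i).aemeasurable, hY.aemeasurable_limit, ?_⟩
  refine tendsto_of_forall_isClosed_limsup_le' fun F hF => ?_
  simp only [ProbabilityMeasure.coe_mk]
  have hthick : ∀ δ : ℝ, 0 < δ →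
      limsup (fun i => μ.map (X i) F) l ≤ μ'.map Z (cthickening δ F) := by
    intro δ hδ
    -- `X i ∈ F` and `dist (X i) (Y i) < δ` put `Y i` in the `δ`-thickening of `F`.
    have hsplit : ∀ i, μ.map (X i) F ≤
        μ.map (Y i) (cthickening δ F) + μ {ω | δ ≤ dist (X i ω) (Y i ω)} := fun i => by
      rw [Measure.map_apply (hX i) hF.measurableSet]
      refine (measure_mono fun ω hω => ?_).trans ((measure_union_le _ _).trans
        (add_le_add (Measure.le_map_apply (hY.forall_aemeasurable i) _) le_rfl))
      by_contra h
      simp only [Set.mem_union, Set.mem_preimage, Set.mem_ofPred_eq, not_or, not_le] at h hω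
      exact h.1 (thickening_subset_cthickening δ F
        (mem_thickening_iff.mpr ⟨X i ω, hω, by rw [dist_comm]; exact h.2⟩))
    calc limsup (fun i => μ.map (X i) F) l
        ≤ limsup (fun i => μ.map (Y i) (cthickening δ F) + μ {ω | δ ≤ dist (X i ω) (Y i ω)}) l :=
          limsup_le_limsup (.of_forall hsplit)
      _ = limsup (fun i => μ.map (Y i) (cthickening δ F)) l :=
          ENNReal.limsup_add_of_right_tendsto_zero (hXY δ hδ) _
      _ ≤ μ'.map Z (cthickening δ F) :=
          ProbabilityMeasure.limsup_measure_closed_le_of_tendsto hY.tendsto isClosed_cthickening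
  have hlim : Tendsto (fun δ => μ'.map Z (cthickening δ F)) (𝓝[>] 0) (𝓝 (μ'.map Z F)) :=
    (tendsto_measure_cthickening_of_isClosed ⟨1, one_pos, measure_ne_top _ _⟩ hF).mono_left
      nhdsWithin_le_nhds
  exact ge_of_tendsto hlim (eventually_nhdsWithin_of_forall fun δ hδ => hthick δ hδ)

end MeasureTheory

namespace ProbabilityTheory

variable {Ω α β : Type*} {mΩ : MeasurableSpace Ω} {mα : MeasurableSpace α}
  {mβ : MeasurableSpace β} {P : Measure Ω} [IsFiniteMeasure P]

theorem IndepFun.integral_comp_prodMk_eq_integral_integral {X : Ω → α} {Y : Ω → β}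
    (hXY : IndepFun X Y P) (hX : Measurable X) (hY : Measurable Y) {H : α × β → ℝ}
    (hH : StronglyMeasurable H) (hHi : Integrable H ((P.map X).prod (P.map Y))) :
    ∫ ω, H (X ω, Y ω) ∂P = ∫ x, ∫ ω, H (x, Y ω) ∂P ∂(P.map X) := by
  have hlaw : P.map (fun ω => (X ω, Y ω)) = (P.map X).prod (P.map Y) :=
    (indepFun_iff_map_prod_eq_prod_map_map hX.aemeasurable hY.aemeasurable).mp hXY
  rw [← integral_map (hX.prodMk hY).aemeasurable hH.aestronglyMeasurable, hlaw,
    integral_prod _ hHi]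
  refine integral_congr_ae (.of_forall fun x => ?_)
  exact integral_map hY.aemeasurable
    (hH.comp_measurable measurable_prodMk_left).aestronglyMeasurable

end ProbabilityTheory

namespace WhiteNoiseRDS

open BoundedContinuousFunction

variable {Ω E : Type} [MeasurableSpace Ω] [MetricSpace E] [MeasurableSpace E] [BorelSpace E]
  (R : WhiteNoiseRDS Ω E)

instance : IsProbabilityMeasure R.P := R.P_prob

theorem measurable_φ_apply (t : ℝ) (x : E) : Measurable fun ω => R.φ t ω x :=
  R.φ_meas.comp (measurable_const.prodMk (measurable_id.prodMk measurable_const))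

theorem F0_le : R.F0 ≤ ‹MeasurableSpace Ω› := iSup₂_le fun s _ => R.F_le s 0

theorem indep_F0_F {t : ℝ} (ht : 0 ≤ t) : Indep R.F0 (R.F 0 t) R.P := by
  have hpast : ∀ s ≤ 0, Indep (R.F s 0) (R.F 0 t) R.P := fun s hs => by
    have hmono : Monotone ![s, 0, t] := by
      rw [Fin.monotone_iff_le_succ]
      intro i
      fin_cases i <;> simp [hs, ht]
    simpa using (R.F_indep 2 ![s, 0, t] hmono).indep (i := 0) (j := 1) (by decide)
  rw [F0, iSup_subtype']
  refine indep_iSup_of_directed_le (fun s => hpast s s.2) (fun _ => R.F_le _ _) (R.F_le 0 t) ?_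
  intro s s'
  exact ⟨⟨min s s', min_le_of_left_le (Set.mem_Iic.mp s.2)⟩,
    R.F_mono _ _ _ _ (min_le_left _ _) s.2 le_rfl, R.F_mono _ _ _ _ (min_le_right _ _) s'.2 le_rfl⟩

theorem integral_comp_φ_of_measurable_F0 [SecondCountableTopology E] {a : Ω → E}
    (ha : Measurable[R.F0] a) {t : ℝ} (ht : 0 ≤ t) (f : E →ᵇ ℝ) :
    ∫ ω, f (R.φ t ω (a ω)) ∂ R.P = ∫ x, ∫ ω, f (R.φ t ω x) ∂ R.P ∂(R.P.map a) := by
  -- `id : Ω → (Ω, F 0 t)` is the noise driving `φ t`.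
  have hindep : @IndepFun Ω E Ω _ _ (R.F 0 t) a id R.P := by
    refine (@IndepFun_iff_Indep Ω E Ω _ _ (R.F 0 t) a id R.P).mpr ?_
    rw [MeasurableSpace.comap_id]
    exact indep_of_indep_of_le_left (R.indep_F0_F ht) ha.comap_le
  have hH := (f.continuous.measurable.comp (measurable_uncurry_of_continuous_of_measurable
      (u := fun x ω => R.φ t ω x) (R.φ_cont t ht) (R.φ_adapted t ht))).stronglyMeasurable
  exact hindep.integral_comp_prodMk_eq_integral_integral (ha.mono R.F0_le le_rfl)
    (measurable_id'' (R.F_le 0 t)) hH (.of_bound hH.aestronglyMeasurable ‖f‖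
      (.of_forall fun p => f.norm_coe_le_norm _))

theorem θ_neg_apply_θ (t : ℝ) (ω : Ω) : R.θ (-t) (R.θ t ω) = ω := by
  rw [← R.θ_add, neg_add_cancel, R.θ_zero]

theorem map_comp_θ {X : Ω → E} (hX : Measurable X) (t : ℝ) :
    R.P.map (X ∘ R.θ t) = R.P.map X := by
  rw [← Measure.map_map hX (R.θ_meas t), (R.θ_preserves t).map_eq]

theorem invariant_map_of_measurable_F0 [SecondCountableTopology E] {a : Ω → E}
    (ha : Measurable[R.F0] a)
    (ha_inv : ∀ t : ℝ, 0 ≤ t → ∀ᵐ ω ∂ R.P, R.φ t ω (a ω) = a (R.θ t ω)) :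
    R.Invariant (R.P.map a) := by
  intro t ht f
  have ha' : Measurable a := ha.mono R.F0_le le_rfl
  calc ∫ x, ∫ ω, f (R.φ t ω x) ∂ R.P ∂(R.P.map a)
      = ∫ ω, f (R.φ t ω (a ω)) ∂ R.P := (R.integral_comp_φ_of_measurable_F0 ha ht f).symm
    _ = ∫ ω, f ((a ∘ R.θ t) ω) ∂ R.P :=
      integral_congr_ae ((ha_inv t ht).mono fun ω hω => congrArg f hω)
    _ = ∫ x, f x ∂(R.P.map a) := by
      rw [← R.map_comp_θ ha' t, integral_map (ha'.comp (R.θ_meas t)).aemeasurable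
        f.continuous.aestronglyMeasurable]

theorem tendsto_measure_le_dist_comp_θ [SecondCountableTopology E] {a : Ω → E}
    (ha : Measurable a) {x : E}
    (ha_attr : ∀ ε : ℝ, 0 < ε →
      Tendsto (fun t : ℝ => R.P {ω | ε ≤ dist (R.φ t (R.θ (-t) ω) x) (a ω)}) atTop (𝓝 0))
    {ε : ℝ} (hε : 0 < ε) :
    Tendsto (fun t : ℝ => R.P {ω | ε ≤ dist (R.φ t ω x) (a (R.θ t ω))}) atTop (𝓝 0) := by
  refine (ha_attr ε hε).congr fun t => ?_
  have hmeas : MeasurableSet {ω | ε ≤ dist (R.φ t (R.θ (-t) ω) x) (a ω)} :=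
    measurableSet_le measurable_const (((R.measurable_φ_apply t x).comp (R.θ_meas (-t))).dist ha)
  rw [← (R.θ_preserves t).measure_preimage hmeas.nullMeasurableSet]
  congr 1
  ext ω
  simp only [Set.mem_preimage, Set.mem_ofPred_eq, θ_neg_apply_θ]

theorem tendstoInDistribution_comp_θ {a : Ω → E} (ha : Measurable a) :
    TendstoInDistribution (fun t => a ∘ R.θ t) atTop a (fun _ => R.P) R.P where
  forall_aemeasurable t := (ha.comp (R.θ_meas t)).aemeasurable
  aemeasurable_limit := ha.aemeasurable
  tendsto := by
    simp only [R.map_comp_θ ha]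
    exact tendsto_const_nhds

theorem stronglyMixing_map [SecondCountableTopology E] {a : Ω → E} (ha : Measurable a)
    (ha_attr : ∀ x : E, ∀ ε : ℝ, 0 < ε →
      Tendsto (fun t : ℝ => R.P {ω | ε ≤ dist (R.φ t (R.θ (-t) ω) x) (a ω)}) atTop (𝓝 0)) :
    R.StronglyMixing (R.P.map a) := by
  intro x f
  have hconv := (R.tendstoInDistribution_comp_θ ha).of_tendsto_measure_le_dist
    (fun t => R.measurable_φ_apply t x)
    (fun ε hε => R.tendsto_measure_le_dist_comp_θ ha (ha_attr x) hε)
  have hint := ProbabilityMeasure.tendsto_iff_forall_integral_tendsto.mp hconv.tendsto f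
  simp only [ProbabilityMeasure.coe_mk] at hint
  refine hint.congr fun t => ?_
  exact integral_map (R.measurable_φ_apply t x).aemeasurable f.continuous.aestronglyMeasurable

theorem tendsto_measure_le_dist_φ [SecondCountableTopology E] {a : Ω → E} (ha : Measurable a)
    (ha_attr : ∀ x : E, ∀ ε : ℝ, 0 < ε →
      Tendsto (fun t : ℝ => R.P {ω | ε ≤ dist (R.φ t (R.θ (-t) ω) x) (a ω)}) atTop (𝓝 0))
    (x y : E) {ε : ℝ} (hε : 0 < ε) :
    Tendsto (fun t : ℝ => R.P {ω | ε ≤ dist (R.φ t ω x) (R.φ t ω y)}) atTop (𝓝 0) :=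
  tendsto_measure_le_dist_triangle_right
    (Z := fun t ω => a (R.θ t ω)) (fun _ hε => R.tendsto_measure_le_dist_comp_θ ha (ha_attr x) hε)
    (fun _ hε => R.tendsto_measure_le_dist_comp_θ ha (ha_attr y) hε) hε

theorem weakGlobalPointwiseStability_of_tendsto_measure_le_dist (ρ : Measure E)
    [IsProbabilityMeasure ρ]
    (h : ∀ x y : E, ∀ ε : ℝ, 0 < ε →
      Tendsto (fun t : ℝ => R.P {ω | ε ≤ dist (R.φ t ω x) (R.φ t ω y)}) atTop (𝓝 0)) :
    R.WeakGlobalPointwiseStability ρ := by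
  refine ⟨Set.univ, MeasurableSet.univ, measure_univ, fun n => (n : ℝ), Nat.strictMono_cast,
    tendsto_natCast_atTop_atTop, fun x _ y _ => ⟨1, one_pos, fun η hη => ?_⟩⟩
  have hfar := (h x y η hη).comp tendsto_natCast_atTop_atTop
  have hnear : ∀ n : ℕ, 1 - R.P {ω | η ≤ dist (R.φ n ω x) (R.φ n ω y)} ≤
      R.P {ω | dist (R.φ n ω x) (R.φ n ω y) ≤ η} := fun n => by
    refine tsub_le_iff_right.mpr ?_
    calc 1 = R.P Set.univ := measure_univ.symm
      _ ≤ R.P ({ω | dist (R.φ n ω x) (R.φ n ω y) ≤ η} ∪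
          {ω | η ≤ dist (R.φ n ω x) (R.φ n ω y)}) :=
        measure_mono fun ω _ => le_total (dist (R.φ n ω x) (R.φ n ω y)) η
      _ ≤ _ := measure_union_le _ _
  have hclose : Tendsto (fun n : ℕ => R.P {ω | dist (R.φ n ω x) (R.φ n ω y) ≤ η}) atTop (𝓝 1) :=
    tendsto_of_tendsto_of_tendsto_of_le_of_le (by
      simpa using ENNReal.Tendsto.sub tendsto_const_nhds hfar (Or.inl ENNReal.one_ne_top))
      tendsto_const_nhds hnear fun _ => prob_le_one
  exact hclose.liminf_eq.ge

end WhiteNoiseRDS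

theorem converse_of_weakSynchronization_general
    {Ω E : Type} [MeasurableSpace Ω] [MetricSpace E]
    [TopologicalSpace.SeparableSpace E] [MeasurableSpace E] [BorelSpace E]
    (R : WhiteNoiseRDS Ω E) (a : Ω → E)
    (ha_meas : Measurable[R.F0] a)
    (ha_inv : ∀ t : ℝ, 0 ≤ t → ∀ᵐ ω ∂ R.P, R.φ t ω (a ω) = a (R.θ t ω))
    (ha_attr : ∀ x : E, ∀ ε : ℝ, 0 < ε →
      Filter.Tendsto (fun t : ℝ => R.P {ω | ε ≤ dist (R.φ t (R.θ (-t) ω) x) (a ω)})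
        Filter.atTop (nhds 0)) :
    MeasureTheory.IsProbabilityMeasure (R.P.map a) ∧
    R.Invariant (R.P.map a) ∧
    R.StronglyMixing (R.P.map a) ∧
    (∀ x y : E, ∀ ε : ℝ, 0 < ε →
      Filter.Tendsto (fun t : ℝ => R.P {ω | ε ≤ dist (R.φ t ω x) (R.φ t ω y)})
        Filter.atTop (nhds 0)) ∧
    R.WeakGlobalPointwiseStability (R.P.map a) := by
  have : SecondCountableTopology E := UniformSpace.secondCountable_of_separable E
  have ha : Measurable a := ha_meas.mono R.F0_le le_rfl
  have hρ : IsProbabilityMeasure (R.P.map a) := Measure.isProbabilityMeasure_map ha.aemeasurable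
  have hpairs : ∀ x y : E, ∀ ε : ℝ, 0 < ε →
      Tendsto (fun t : ℝ => R.P {ω | ε ≤ dist (R.φ t ω x) (R.φ t ω y)}) atTop (𝓝 0) :=
    fun x y _ hε => R.tendsto_measure_le_dist_φ ha ha_attr x y hε
  exact ⟨hρ, R.invariant_map_of_measurable_F0 ha_meas ha_inv, R.stronglyMixing_map ha ha_attr,
    hpairs, R.weakGlobalPointwiseStability_of_tendsto_measure_le_dist _ hpairs⟩

/-- **Remark (converse).** If weak synchronization holds for a white-noise RDS on a complete
separable metric space, with synchronizing `F_0`-measurable random point `a`, then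
`ρ := P ∘ a⁻¹ = E[δ_{a(ω)}]` is an invariant probability measure, `φ` is strongly mixing
w.r.t. `ρ`, the distance of any two trajectories converges to `0` in probability, and in
particular `φ` satisfies weak global pointwise stability. -/
theorem converse_of_weakSynchronization
    {Ω E : Type} [MeasurableSpace Ω] [MetricSpace E] [CompleteSpace E]
    [TopologicalSpace.SeparableSpace E] [MeasurableSpace E] [BorelSpace E]
    (R : WhiteNoiseRDS Ω E) (a : Ω → E)
    (ha_meas : Measurable[R.F0] a)
    (ha_inv : ∀ t : ℝ, 0 ≤ t → ∀ᵐ ω ∂ R.P, R.φ t ω (a ω) = a (R.θ t ω))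
    (ha_attr : ∀ x : E, ∀ ε : ℝ, 0 < ε →
      Filter.Tendsto (fun t : ℝ => R.P {ω | ε ≤ dist (R.φ t (R.θ (-t) ω) x) (a ω)})
        Filter.atTop (nhds 0)) :
    MeasureTheory.IsProbabilityMeasure (R.P.map a) ∧
    R.Invariant (R.P.map a) ∧
    R.StronglyMixing (R.P.map a) ∧
    (∀ x y : E, ∀ ε : ℝ, 0 < ε →
      Filter.Tendsto (fun t : ℝ => R.P {ω | ε ≤ dist (R.φ t ω x) (R.φ t ω y)})
        Filter.atTop (nhds 0)) ∧
    R.WeakGlobalPointwiseStability (R.P.map a) :=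
  converse_of_weakSynchronization_general R a ha_meas ha_inv ha_attr
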